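/- arXiv:1807.01959 — 4 statements merged into one kernel-verified Lean document; each statement's English description precedes it below -/
import Mathlib

section
/- Let π be a Poisson tensor on ℝ^N and v a Poisson vector field for π. Then the complete lift v_C is a Poisson vector field on ℝ^N × ℝ^N for the tangent lift π_TM, i.e. for all (x,y) and all indices a,b one has ∑_s ( (∂(π_TM)^{ab}/∂z^s) (v_C)^s − (π_TM)^{sb} ∂(v_C)^a/∂z^s − (π_TM)^{as} ∂(v_C)^b/∂z^s ) = 0. -/
open scoped BigOperators

/-- Partial derivative of `f : ℝ^N → ℝ` in the `s`-th coordinate direction. -/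
noncomputable def pd {N : ℕ} (f : (Fin N → ℝ) → ℝ) (s : Fin N) (x : Fin N → ℝ) : ℝ :=
  fderiv ℝ f x (Pi.single s 1)

/-- Coordinate direction on `ℝ^N × ℝ^N` indexed by `Fin N ⊕ Fin N`. -/
noncomputable def dir (N : ℕ) (a : Fin N ⊕ Fin N) : (Fin N → ℝ) × (Fin N → ℝ) :=
  Sum.elim (fun i => (Pi.single i 1, 0)) (fun i => (0, Pi.single i 1)) a

/-- Partial derivative on `ℝ^N × ℝ^N` in the `a`-th coordinate direction. -/
noncomputable def pdT {N : ℕ} (F : (Fin N → ℝ) × (Fin N → ℝ) → ℝ)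
    (a : Fin N ⊕ Fin N) (z : (Fin N → ℝ) × (Fin N → ℝ)) : ℝ :=
  fderiv ℝ F z (dir N a)

/-- `π` is a Poisson tensor on `ℝ^N`: a smooth antisymmetric bivector field
satisfying the Jacobi identity. -/
def IsPoisson {N : ℕ} (π : (Fin N → ℝ) → Matrix (Fin N) (Fin N) ℝ) : Prop :=
  (∀ i j, ContDiff ℝ (⊤ : ℕ∞) fun x => π x i j) ∧
  (∀ x i j, π x j i = - π x i j) ∧
  (∀ x i j k, ∑ s, (π x i s * pd (fun x => π x j k) s x
      + π x j s * pd (fun x => π x k i) s x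
      + π x k s * pd (fun x => π x i j) s x) = 0)

/-- `v` is a (smooth) Poisson vector field for `π` (i.e. `L_v π = 0`). -/
def IsPoissonVF {N : ℕ} (π : (Fin N → ℝ) → Matrix (Fin N) (Fin N) ℝ)
    (v : (Fin N → ℝ) → Fin N → ℝ) : Prop :=
  (∀ i, ContDiff ℝ (⊤ : ℕ∞) fun x => v x i) ∧
  (∀ x i j, ∑ s, (pd (fun x => π x i j) s x * v x s
      - π x s j * pd (fun x => v x i) s x
      - π x i s * pd (fun x => v x j) s x) = 0)

/-- The tangent lift `π_TM` of `π` to `ℝ^N × ℝ^N`. -/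
noncomputable def tlift {N : ℕ} (π : (Fin N → ℝ) → Matrix (Fin N) (Fin N) ℝ)
    (z : (Fin N → ℝ) × (Fin N → ℝ)) : Matrix (Fin N ⊕ Fin N) (Fin N ⊕ Fin N) ℝ :=
  Matrix.of fun a b =>
    match a, b with
    | Sum.inl _, Sum.inl _ => 0
    | Sum.inl i, Sum.inr j => π z.1 i j
    | Sum.inr i, Sum.inl j => π z.1 i j
    | Sum.inr i, Sum.inr j => ∑ s, pd (fun x => π x i j) s z.1 * z.2 s

/-- The complete lift `v_C` of a vector field `v`. -/
noncomputable def liftC {N : ℕ} (v : (Fin N → ℝ) → Fin N → ℝ)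
    (z : (Fin N → ℝ) × (Fin N → ℝ)) : Fin N ⊕ Fin N → ℝ :=
  Sum.elim (fun i => v z.1 i) (fun i => ∑ s, pd (fun x => v x i) s z.1 * z.2 s)

/-- The vertical lift `v_V` of a vector field `v`. -/
def liftV {N : ℕ} (v : (Fin N → ℝ) → Fin N → ℝ)
    (z : (Fin N → ℝ) × (Fin N → ℝ)) : Fin N ⊕ Fin N → ℝ :=
  Sum.elim (fun _ => 0) (fun i => v z.1 i)

/-- The wedge `u ∧ w` of two vector fields, as a bivector field. -/
def wedge {Z ι : Type*} (u w : Z → ι → ℝ) (z : Z) : Matrix ι ι ℝ :=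
  Matrix.of fun a b => u z a * w z b - u z b * w z a

/-- A Poisson tensor on `ℝ^N × ℝ^N`: a smooth antisymmetric bivector field
satisfying the Jacobi identity. -/
def IsPoissonT {N : ℕ}
    (P : (Fin N → ℝ) × (Fin N → ℝ) → Matrix (Fin N ⊕ Fin N) (Fin N ⊕ Fin N) ℝ) : Prop :=
  (∀ a b, ContDiff ℝ (⊤ : ℕ∞) fun z => P z a b) ∧
  (∀ z a b, P z b a = - P z a b) ∧
  (∀ z a b c, ∑ s, (P z a s * pdT (fun z => P z b c) s z
      + P z b s * pdT (fun z => P z c a) s z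
      + P z c s * pdT (fun z => P z a b) s z) = 0)

/-- `c` is a Casimir function for `π` on `ℝ^N`. -/
def IsCasimir {N : ℕ} (π : (Fin N → ℝ) → Matrix (Fin N) (Fin N) ℝ)
    (c : (Fin N → ℝ) → ℝ) : Prop :=
  ContDiff ℝ (⊤ : ℕ∞) c ∧ ∀ x j, ∑ i, pd c i x * π x i j = 0

/-- `F` is a Casimir function for the bivector field `P` on `ℝ^N × ℝ^N`. -/
def IsCasimirT {N : ℕ}
    (P : (Fin N → ℝ) × (Fin N → ℝ) → Matrix (Fin N ⊕ Fin N) (Fin N ⊕ Fin N) ℝ)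
    (F : (Fin N → ℝ) × (Fin N → ℝ) → ℝ) : Prop :=
  ∀ z b, ∑ a, pdT F a z * P z a b = 0

/-- `f ∘ q : ℝ^N × ℝ^N → ℝ`. -/
def fq {N : ℕ} (f : (Fin N → ℝ) → ℝ) (z : (Fin N → ℝ) × (Fin N → ℝ)) : ℝ := f z.1

/-- The fiber-wise linear function `l_{df}` on `ℝ^N × ℝ^N`. -/
noncomputable def ldf {N : ℕ} (f : (Fin N → ℝ) → ℝ) (z : (Fin N → ℝ) × (Fin N → ℝ)) : ℝ :=
  ∑ s, pd f s z.1 * z.2 s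

/-- The commutator `[v,w]` of two vector fields on `ℝ^N`. -/
noncomputable def vbr {N : ℕ} (v w : (Fin N → ℝ) → Fin N → ℝ)
    (x : Fin N → ℝ) (i : Fin N) : ℝ :=
  ∑ s, (v x s * pd (fun x => w x i) s x - w x s * pd (fun x => v x i) s x)

section CLhelpers
variable {N : ℕ}

theorem dA {f : (Fin N → ℝ) → ℝ} (hf : ContDiff ℝ (⊤ : ℕ∞) f) (x : Fin N → ℝ) :
    DifferentiableAt ℝ f x :=
  (hf.differentiable (by simp)).differentiableAt

theorem contDiff_pd {f : (Fin N → ℝ) → ℝ} (hf : ContDiff ℝ (⊤ : ℕ∞) f) (s : Fin N) :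
    ContDiff ℝ (⊤ : ℕ∞) fun x => pd f s x :=
  (hf.fderiv_right (m := (⊤ : ℕ∞)) (by simp)).clm_apply contDiff_const

theorem pd_comm {f : (Fin N → ℝ) → ℝ} (hf : ContDiff ℝ (⊤ : ℕ∞) f) (s t : Fin N) (x : Fin N → ℝ) :
    pd (fun y => pd f s y) t x = pd (fun y => pd f t y) s x := by
  have hsymm : IsSymmSndFDerivAt ℝ f x := hf.contDiffAt.isSymmSndFDerivAt (by rw [minSmoothness_of_isRCLikeNormedField]; exact WithTop.coe_le_coe.mpr le_top)
  have hder : DifferentiableAt ℝ (fderiv ℝ f) x :=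
    ((hf.fderiv_right (m := (⊤ : ℕ∞)) (by simp)).differentiable (by simp)).differentiableAt
  have key : ∀ u w : Fin N,
      pd (fun y => pd f u y) w x = fderiv ℝ (fderiv ℝ f) x (Pi.single w 1) (Pi.single u 1) := by
    intro u w
    have h2 : pd (fun y => pd f u y) w x
        = fderiv ℝ (fun y => (fderiv ℝ f y) (Pi.single u 1)) x (Pi.single w 1) := rfl
    rw [h2, fderiv_clm_apply hder (differentiableAt_const _)]
    simp
  rw [key, key, hsymm]

theorem pdT_zero (s : Fin N ⊕ Fin N) (z : (Fin N → ℝ) × (Fin N → ℝ)) :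
    pdT (fun _ => (0 : ℝ)) s z = 0 := by
  simp [pdT]

theorem pdT_base_inl {f : (Fin N → ℝ) → ℝ} {z : (Fin N → ℝ) × (Fin N → ℝ)}
    (hf : DifferentiableAt ℝ f z.1) (s : Fin N) :
    pdT (fun z => f z.1) (Sum.inl s) z = pd f s z.1 := by
  have h : HasFDerivAt (fun z : (Fin N → ℝ) × (Fin N → ℝ) => f z.1)
      ((fderiv ℝ f z.1).comp (ContinuousLinearMap.fst ℝ (Fin N → ℝ) (Fin N → ℝ))) z :=
    hf.hasFDerivAt.comp z hasFDerivAt_fst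
  rw [pdT, h.fderiv]
  simp [dir, pd]

theorem pdT_base_inr {f : (Fin N → ℝ) → ℝ} {z : (Fin N → ℝ) × (Fin N → ℝ)}
    (hf : DifferentiableAt ℝ f z.1) (s : Fin N) :
    pdT (fun z => f z.1) (Sum.inr s) z = 0 := by
  have h : HasFDerivAt (fun z : (Fin N → ℝ) × (Fin N → ℝ) => f z.1)
      ((fderiv ℝ f z.1).comp (ContinuousLinearMap.fst ℝ (Fin N → ℝ) (Fin N → ℝ))) z :=
    hf.hasFDerivAt.comp z hasFDerivAt_fst
  rw [pdT, h.fderiv]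
  simp [dir]

theorem hasFDerivAt_fib {g : Fin N → (Fin N → ℝ) → ℝ} {z : (Fin N → ℝ) × (Fin N → ℝ)}
    (hg : ∀ t, DifferentiableAt ℝ (g t) z.1) :
    HasFDerivAt (fun z : (Fin N → ℝ) × (Fin N → ℝ) => ∑ t, g t z.1 * z.2 t)
      (∑ t, ((g t z.1) • ((ContinuousLinearMap.proj t).comp
          (ContinuousLinearMap.snd ℝ (Fin N → ℝ) (Fin N → ℝ)))
        + (z.2 t) • ((fderiv ℝ (g t) z.1).comp
          (ContinuousLinearMap.fst ℝ (Fin N → ℝ) (Fin N → ℝ))))) z := by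
  apply HasFDerivAt.fun_sum
  intro t _
  have h1 : HasFDerivAt (fun z : (Fin N → ℝ) × (Fin N → ℝ) => g t z.1)
      ((fderiv ℝ (g t) z.1).comp (ContinuousLinearMap.fst ℝ (Fin N → ℝ) (Fin N → ℝ))) z :=
    (hg t).hasFDerivAt.comp z hasFDerivAt_fst
  have h2 : HasFDerivAt (fun z : (Fin N → ℝ) × (Fin N → ℝ) => z.2 t)
      ((ContinuousLinearMap.proj t).comp (ContinuousLinearMap.snd ℝ (Fin N → ℝ) (Fin N → ℝ))) z :=
    ((ContinuousLinearMap.proj t).comp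
      (ContinuousLinearMap.snd ℝ (Fin N → ℝ) (Fin N → ℝ))).hasFDerivAt
  exact h1.mul h2

theorem pdT_fib_inl {g : Fin N → (Fin N → ℝ) → ℝ} {z : (Fin N → ℝ) × (Fin N → ℝ)}
    (hg : ∀ t, DifferentiableAt ℝ (g t) z.1) (s : Fin N) :
    pdT (fun z => ∑ t, g t z.1 * z.2 t) (Sum.inl s) z = ∑ t, z.2 t * pd (g t) s z.1 := by
  rw [pdT, (hasFDerivAt_fib hg).fderiv]
  simp [dir, pd]

theorem pdT_fib_inr {g : Fin N → (Fin N → ℝ) → ℝ} {z : (Fin N → ℝ) × (Fin N → ℝ)}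
    (hg : ∀ t, DifferentiableAt ℝ (g t) z.1) (s : Fin N) :
    pdT (fun z => ∑ t, g t z.1 * z.2 t) (Sum.inr s) z = g s z.1 := by
  rw [pdT, (hasFDerivAt_fib hg).fderiv]
  simp [dir, Pi.single_apply]

theorem hv_deriv {π : (Fin N → ℝ) → Matrix (Fin N) (Fin N) ℝ}
    {v : (Fin N → ℝ) → Fin N → ℝ}
    (hπ1 : ∀ i j, ContDiff ℝ (⊤ : ℕ∞) fun x => π x i j)
    (hv1 : ∀ i, ContDiff ℝ (⊤ : ℕ∞) fun x => v x i)
    (hv2 : ∀ x i j, ∑ s, (pd (fun x => π x i j) s x * v x s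
      - π x s j * pd (fun x => v x i) s x - π x i s * pd (fun x => v x j) s x) = 0)
    (x : Fin N → ℝ) (a b u : Fin N) :
    ∑ t, (pd (fun y => pd (fun x => π x a b) t y) u x * v x t
        + pd (fun x => π x a b) t x * pd (fun x => v x t) u x
        - (pd (fun x => π x t b) u x * pd (fun x => v x a) t x
          + π x t b * pd (fun y => pd (fun x => v x a) t y) u x)
        - (pd (fun x => π x a t) u x * pd (fun x => v x b) t x
          + π x a t * pd (fun y => pd (fun x => v x b) t y) u x)) = 0 := by
  have hD : HasFDerivAt (fun y => ∑ t, (pd (fun x => π x a b) t y * v y t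
      - π y t b * pd (fun x => v x a) t y - π y a t * pd (fun x => v x b) t y))
      (∑ t, (((pd (fun x => π x a b) t x • fderiv ℝ (fun x => v x t) x
          + v x t • fderiv ℝ (fun y => pd (fun x => π x a b) t y) x)
        - (π x t b • fderiv ℝ (fun y => pd (fun x => v x a) t y) x
          + pd (fun x => v x a) t x • fderiv ℝ (fun x => π x t b) x))
        - (π x a t • fderiv ℝ (fun y => pd (fun x => v x b) t y) x
          + pd (fun x => v x b) t x • fderiv ℝ (fun x => π x a t) x))) x := by
    apply HasFDerivAt.fun_sum
    intro t _
    exact (((dA (contDiff_pd (hπ1 a b) t) x).hasFDerivAt.mul (dA (hv1 t) x).hasFDerivAt).sub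
      ((dA (hπ1 t b) x).hasFDerivAt.mul (dA (contDiff_pd (hv1 a) t) x).hasFDerivAt)).sub
      ((dA (hπ1 a t) x).hasFDerivAt.mul (dA (contDiff_pd (hv1 b) t) x).hasFDerivAt)
  have h0 : HasFDerivAt (fun y => ∑ t, (pd (fun x => π x a b) t y * v y t
      - π y t b * pd (fun x => v x a) t y - π y a t * pd (fun x => v x b) t y))
      (0 : ((Fin N → ℝ) →L[ℝ] ℝ)) x := by
    have hfun : (fun y => ∑ t, (pd (fun x => π x a b) t y * v y t
        - π y t b * pd (fun x => v x a) t y - π y a t * pd (fun x => v x b) t y))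
        = fun _ => (0 : ℝ) := funext fun y => hv2 y a b
    rw [hfun]
    exact hasFDerivAt_const 0 x
  have heq := hD.unique h0
  have hEval := congrArg (fun L : (Fin N → ℝ) →L[ℝ] ℝ => L (Pi.single u 1)) heq
  simp only [ContinuousLinearMap.sum_apply, ContinuousLinearMap.zero_apply,
    ContinuousLinearMap.sub_apply, ContinuousLinearMap.add_apply,
    ContinuousLinearMap.smul_apply, smul_eq_mul] at hEval
  refine Eq.trans ?_ hEval
  refine Finset.sum_congr rfl fun t _ => ?_
  simp only [pd]
  ring

end CLhelpers


/-- the complete lift of a Poisson vector field is a Poisson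
vector field for the tangent lift `π_TM`. -/
theorem complete_lift_is_poisson_vf {N : ℕ}
    (π : (Fin N → ℝ) → Matrix (Fin N) (Fin N) ℝ) (v : (Fin N → ℝ) → Fin N → ℝ)
    (hπ : IsPoisson π) (hv : IsPoissonVF π v) :
    ∀ (z : (Fin N → ℝ) × (Fin N → ℝ)) (a b : Fin N ⊕ Fin N),
      ∑ s, (pdT (fun z => tlift π z a b) s z * liftC v z s
        - tlift π z s b * pdT (fun z => liftC v z a) s z
        - tlift π z a s * pdT (fun z => liftC v z b) s z) = 0 := by
  obtain ⟨hπ1, hπanti, hπjac⟩ := hπ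
  obtain ⟨hv1, hv2⟩ := hv
  intro z a b
  have tll : ∀ (w : (Fin N → ℝ) × (Fin N → ℝ)) (i j : Fin N),
      tlift π w (Sum.inl i) (Sum.inl j) = 0 := fun _ _ _ => rfl
  have tlr : ∀ (w : (Fin N → ℝ) × (Fin N → ℝ)) (i j : Fin N),
      tlift π w (Sum.inl i) (Sum.inr j) = π w.1 i j := fun _ _ _ => rfl
  have trl : ∀ (w : (Fin N → ℝ) × (Fin N → ℝ)) (i j : Fin N),
      tlift π w (Sum.inr i) (Sum.inl j) = π w.1 i j := fun _ _ _ => rfl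
  have trr : ∀ (w : (Fin N → ℝ) × (Fin N → ℝ)) (i j : Fin N),
      tlift π w (Sum.inr i) (Sum.inr j)
        = ∑ s, pd (fun x => π x i j) s w.1 * w.2 s := fun _ _ _ => rfl
  have lcl : ∀ (w : (Fin N → ℝ) × (Fin N → ℝ)) (i : Fin N),
      liftC v w (Sum.inl i) = v w.1 i := fun _ _ => rfl
  have lcr : ∀ (w : (Fin N → ℝ) × (Fin N → ℝ)) (i : Fin N),
      liftC v w (Sum.inr i)
        = ∑ s, pd (fun x => v x i) s w.1 * w.2 s := fun _ _ => rfl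
  have hπl : ∀ (c d : Fin N) (t : Fin N),
      pdT (fun z : (Fin N → ℝ) × (Fin N → ℝ) => π z.1 c d) (Sum.inl t) z
        = pd (fun x => π x c d) t z.1 := fun c d t => pdT_base_inl (dA (hπ1 c d) _) t
  have hπr : ∀ (c d : Fin N) (t : Fin N),
      pdT (fun z : (Fin N → ℝ) × (Fin N → ℝ) => π z.1 c d) (Sum.inr t) z = 0 :=
    fun c d t => pdT_base_inr (dA (hπ1 c d) _) t
  have hvl : ∀ (c : Fin N) (t : Fin N),
      pdT (fun z : (Fin N → ℝ) × (Fin N → ℝ) => v z.1 c) (Sum.inl t) z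
        = pd (fun x => v x c) t z.1 := fun c t => pdT_base_inl (dA (hv1 c) _) t
  have hvr : ∀ (c : Fin N) (t : Fin N),
      pdT (fun z : (Fin N → ℝ) × (Fin N → ℝ) => v z.1 c) (Sum.inr t) z = 0 :=
    fun c t => pdT_base_inr (dA (hv1 c) _) t
  have hfvl : ∀ (c : Fin N) (t : Fin N),
      pdT (fun z : (Fin N → ℝ) × (Fin N → ℝ) =>
          ∑ s, pd (fun x => v x c) s z.1 * z.2 s) (Sum.inl t) z
        = ∑ u, z.2 u * pd (fun y => pd (fun x => v x c) u y) t z.1 :=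
    fun c t => pdT_fib_inl (fun s => dA (contDiff_pd (hv1 c) s) _) t
  have hfvr : ∀ (c : Fin N) (t : Fin N),
      pdT (fun z : (Fin N → ℝ) × (Fin N → ℝ) =>
          ∑ s, pd (fun x => v x c) s z.1 * z.2 s) (Sum.inr t) z
        = pd (fun x => v x c) t z.1 :=
    fun c t => pdT_fib_inr (fun s => dA (contDiff_pd (hv1 c) s) _) t
  have hfπl : ∀ (c d : Fin N) (t : Fin N),
      pdT (fun z : (Fin N → ℝ) × (Fin N → ℝ) =>
          ∑ s, pd (fun x => π x c d) s z.1 * z.2 s) (Sum.inl t) z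
        = ∑ u, z.2 u * pd (fun y => pd (fun x => π x c d) u y) t z.1 :=
    fun c d t => pdT_fib_inl (fun s => dA (contDiff_pd (hπ1 c d) s) _) t
  have hfπr : ∀ (c d : Fin N) (t : Fin N),
      pdT (fun z : (Fin N → ℝ) × (Fin N → ℝ) =>
          ∑ s, pd (fun x => π x c d) s z.1 * z.2 s) (Sum.inr t) z
        = pd (fun x => π x c d) t z.1 :=
    fun c d t => pdT_fib_inr (fun s => dA (contDiff_pd (hπ1 c d) s) _) t
  cases a with
  | inl i =>
    cases b with
    | inl j =>
      rw [Fintype.sum_sum_type]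
      simp only [tll, tlr, trl, trr, lcl, lcr, pdT_zero, hπl, hπr, hvl, hvr, hfvl, hfvr,
        hfπl, hfπr, zero_mul, mul_zero, sub_zero, zero_sub, neg_zero,
        Finset.sum_const_zero, add_zero]
    | inr j =>
      rw [Fintype.sum_sum_type]
      simp only [tll, tlr, trl, trr, lcl, lcr, pdT_zero, hπl, hπr, hvl, hvr, hfvl, hfvr,
        hfπl, hfπr, zero_mul, mul_zero, sub_zero, zero_sub]
      rw [← Finset.sum_add_distrib]
      refine Eq.trans (Finset.sum_congr rfl fun t _ => ?_) (hv2 z.1 i j)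
      ring
  | inr i =>
    cases b with
    | inl j =>
      rw [Fintype.sum_sum_type]
      simp only [tll, tlr, trl, trr, lcl, lcr, pdT_zero, hπl, hπr, hvl, hvr, hfvl, hfvr,
        hfπl, hfπr, zero_mul, mul_zero, sub_zero, zero_sub]
      rw [← Finset.sum_add_distrib]
      refine Eq.trans (Finset.sum_congr rfl fun t _ => ?_) (hv2 z.1 i j)
      ring
    | inr j =>
      rw [Fintype.sum_sum_type]
      simp only [tll, tlr, trl, trr, lcl, lcr, hπl, hπr, hvl, hvr, hfvl, hfvr, hfπl, hfπr]
      simp only [Finset.sum_mul, Finset.mul_sum, ← Finset.sum_sub_distrib,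
        ← Finset.sum_add_distrib]
      rw [Finset.sum_comm]
      refine Finset.sum_eq_zero fun u _ => ?_
      have key := hv_deriv hπ1 hv1 hv2 z.1 i j u
      have key' : ∑ t, z.2 u * (pd (fun y => pd (fun x => π x i j) t y) u z.1 * v z.1 t
          + pd (fun x => π x i j) t z.1 * pd (fun x => v x t) u z.1
          - (pd (fun x => π x t j) u z.1 * pd (fun x => v x i) t z.1
            + π z.1 t j * pd (fun y => pd (fun x => v x i) t y) u z.1)
          - (pd (fun x => π x i t) u z.1 * pd (fun x => v x j) t z.1
            + π z.1 i t * pd (fun y => pd (fun x => v x j) t y) u z.1)) = 0 := by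
        rw [← Finset.mul_sum, key, mul_zero]
      refine Eq.trans (Finset.sum_congr rfl fun t _ => ?_) key'
      rw [pd_comm (hπ1 i j) u t z.1, pd_comm (hv1 i) u t z.1, pd_comm (hv1 j) u t z.1]
      ring
end

section
/- Let π be a Poisson tensor on ℝ^N and v a Poisson vector field for π. Then the vertical lift v_V is a Poisson vector field on ℝ^N × ℝ^N for the tangent lift π_TM, i.e. for all (x,y) and all indices a,b one has ∑_s ( (∂(π_TM)^{ab}/∂z^s) (v_V)^s − (π_TM)^{sb} ∂(v_V)^a/∂z^s − (π_TM)^{as} ∂(v_V)^b/∂z^s ) = 0. -/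
open scoped BigOperators

section Helpers

lemma pdT_fst {N : ℕ} (f : (Fin N → ℝ) → ℝ) (hf : Differentiable ℝ f)
    (a : Fin N ⊕ Fin N) (z : (Fin N → ℝ) × (Fin N → ℝ)) :
    pdT (fun z => f z.1) a z = Sum.elim (fun t => pd f t z.1) (fun _ => 0) a := by
  have h : HasFDerivAt (fun z : (Fin N → ℝ) × (Fin N → ℝ) => f z.1)
      ((fderiv ℝ f z.1).comp (ContinuousLinearMap.fst ℝ _ _)) z :=
    (hf z.1).hasFDerivAt.comp z hasFDerivAt_fst
  unfold pdT pd dir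
  rw [h.fderiv]
  cases a <;> simp

lemma pdT_vert {N : ℕ} (g : Fin N → (Fin N → ℝ) → ℝ) (hg : ∀ s, Differentiable ℝ (g s))
    (t : Fin N) (z : (Fin N → ℝ) × (Fin N → ℝ)) :
    pdT (fun z => ∑ s, g s z.1 * z.2 s) (Sum.inr t) z = g t z.1 := by
  have h : ∀ s : Fin N, HasFDerivAt (fun z : (Fin N → ℝ) × (Fin N → ℝ) => g s z.1 * z.2 s)
      (g s z.1 • ((ContinuousLinearMap.proj s).comp
            (ContinuousLinearMap.snd ℝ (Fin N → ℝ) (Fin N → ℝ)))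
        + z.2 s • ((fderiv ℝ (g s) z.1).comp (ContinuousLinearMap.fst ℝ _ _))) z := by
    intro s
    have h1 : HasFDerivAt (fun z : (Fin N → ℝ) × (Fin N → ℝ) => g s z.1)
        ((fderiv ℝ (g s) z.1).comp (ContinuousLinearMap.fst ℝ _ _)) z :=
      ((hg s) z.1).hasFDerivAt.comp z hasFDerivAt_fst
    have h2 : HasFDerivAt (fun z : (Fin N → ℝ) × (Fin N → ℝ) => z.2 s)
        ((ContinuousLinearMap.proj s).comp
          (ContinuousLinearMap.snd ℝ (Fin N → ℝ) (Fin N → ℝ))) z :=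
      ((ContinuousLinearMap.proj s : ((Fin N → ℝ)) →L[ℝ] ℝ)).hasFDerivAt.comp z hasFDerivAt_snd
    exact h1.mul h2
  have H := HasFDerivAt.fun_sum (fun s (_ : s ∈ Finset.univ) => h s)
  unfold pdT dir
  rw [H.fderiv]
  simp [Pi.single_apply]

end Helpers

/-- the vertical lift of a Poisson vector field is a Poisson
vector field for the tangent lift `π_TM`. -/
theorem vertical_lift_is_poisson_vf {N : ℕ}
    (π : (Fin N → ℝ) → Matrix (Fin N) (Fin N) ℝ) (v : (Fin N → ℝ) → Fin N → ℝ)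
    (hπ : IsPoisson π) (hv : IsPoissonVF π v) :
    ∀ (z : (Fin N → ℝ) × (Fin N → ℝ)) (a b : Fin N ⊕ Fin N),
      ∑ s, (pdT (fun z => tlift π z a b) s z * liftV v z s
        - tlift π z s b * pdT (fun z => liftV v z a) s z
        - tlift π z a s * pdT (fun z => liftV v z b) s z) = 0  := by
  obtain ⟨hπs, hπa, hπJ⟩ := hπ
  obtain ⟨hvs, hvJ⟩ := hv
  intro z a b
  have Dπ : ∀ i j, Differentiable ℝ (fun x => π x i j) :=
    fun i j => (hπs i j).differentiable (by simp)
  have Dv : ∀ i, Differentiable ℝ (fun x => v x i) :=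
    fun i => (hvs i).differentiable (by simp)
  have Dpd : ∀ i j s, Differentiable ℝ (fun x => pd (fun x => π x i j) s x) := by
    intro i j s
    exact ((((hπs i j).fderiv_right (show (1 : WithTop ℕ∞) + 1 ≤ ((⊤ : ℕ∞) : WithTop ℕ∞) by rw [show (1 : WithTop ℕ∞) + 1 = ((1 + 1 : ℕ∞) : WithTop ℕ∞) by norm_cast]; exact WithTop.coe_le_coe.mpr le_top)).clm_apply contDiff_const).differentiable one_ne_zero)
  have hV0 : ∀ (s : Fin N ⊕ Fin N) (z : (Fin N → ℝ) × (Fin N → ℝ)),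
      pdT (fun _ => (0 : ℝ)) s z = 0 := by
    intro s z; simp [pdT]
  have hVv : ∀ (i : Fin N) (s : Fin N ⊕ Fin N) (z : (Fin N → ℝ) × (Fin N → ℝ)),
      pdT (fun z => v z.1 i) s z
        = Sum.elim (fun t => pd (fun x => v x i) t z.1) (fun _ => 0) s := by
    intro i s z; exact pdT_fst _ (Dv i) s z
  have hPd : ∀ (i j : Fin N) (s : Fin N ⊕ Fin N) (z : (Fin N → ℝ) × (Fin N → ℝ)),
      pdT (fun z => π z.1 i j) s z
        = Sum.elim (fun t => pd (fun x => π x i j) t z.1) (fun _ => 0) s := by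
    intro i j s z; exact pdT_fst _ (Dπ i j) s z
  have hvert : ∀ (i j t : Fin N),
      pdT (fun z => ∑ s, pd (fun x => π x i j) s z.1 * z.2 s) (Sum.inr t) z
        = pd (fun x => π x i j) t z.1 :=
    fun i j t => pdT_vert _ (Dpd i j) t z
  cases a with
  | inl i =>
    cases b with
    | inl j =>
      rw [Fintype.sum_sum_type]
      simp [tlift, liftV, hV0, hVv, hPd]
    | inr j =>
      rw [Fintype.sum_sum_type]
      simp [tlift, liftV, hV0, hVv, hPd]
  | inr i =>
    cases b with
    | inl j =>
      rw [Fintype.sum_sum_type]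
      simp [tlift, liftV, hV0, hVv, hPd]
    | inr j =>
      rw [Fintype.sum_sum_type]
      have key := hvJ z.1 i j
      simp only [tlift, liftV, Matrix.of_apply, Sum.elim_inl, Sum.elim_inr]
      simp only [hV0, hVv, hvert, Sum.elim_inl, Sum.elim_inr, mul_zero, zero_mul,
        sub_zero, zero_sub]
      rw [← Finset.sum_add_distrib, ← key]
      exact Finset.sum_congr rfl fun t _ => by ring
end

section
/- For every C^∞ vector field v on ℝ^N, the bivector field v_C ∧ v_V on ℝ^N × ℝ^N (the wedge of the complete lift with the vertical lift of v) is a Poisson tensor, i.e. it is antisymmetric and satisfies the Jacobi identity. -/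
open scoped BigOperators

section Aux

variable {N : ℕ}

local notation "E" => (Fin N → ℝ) × (Fin N → ℝ)

lemma pd_contDiff {f : (Fin N → ℝ) → ℝ} (hf : ContDiff ℝ (⊤ : ℕ∞) f) (s : Fin N) :
    ContDiff ℝ (⊤ : ℕ∞) (pd f s) :=
  (hf.fderiv_right (by simp)).clm_apply contDiff_const

lemma contDiff_snd_apply (r : Fin N) :
    ContDiff ℝ (⊤ : ℕ∞) (fun z : (Fin N → ℝ) × (Fin N → ℝ) => z.2 r) :=
  ((ContinuousLinearMap.proj r (R := ℝ) (φ := fun _ : Fin N => ℝ)).contDiff).comp contDiff_snd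

lemma pdT_sub {f g : (Fin N → ℝ) × (Fin N → ℝ) → ℝ} {z} (a : Fin N ⊕ Fin N)
    (hf : DifferentiableAt ℝ f z) (hg : DifferentiableAt ℝ g z) :
    pdT (fun z => f z - g z) a z = pdT f a z - pdT g a z := by
  simp [pdT, fderiv_fun_sub hf hg]

lemma pdT_mul {f g : (Fin N → ℝ) × (Fin N → ℝ) → ℝ} {z} (a : Fin N ⊕ Fin N)
    (hf : DifferentiableAt ℝ f z) (hg : DifferentiableAt ℝ g z) :
    pdT (fun z => f z * g z) a z = pdT f a z * g z + f z * pdT g a z := by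
  simp [pdT, fderiv_fun_mul hf hg]
  ring

lemma pdT_sum {ι : Type*} {u : Finset ι} {A : ι → (Fin N → ℝ) × (Fin N → ℝ) → ℝ} {z}
    (a : Fin N ⊕ Fin N) (h : ∀ i ∈ u, DifferentiableAt ℝ (A i) z) :
    pdT (fun z => ∑ i ∈ u, A i z) a z = ∑ i ∈ u, pdT (A i) a z := by
  simp [pdT, fderiv_fun_sum h]

lemma pdT_fst_inl {f : (Fin N → ℝ) → ℝ} {z : (Fin N → ℝ) × (Fin N → ℝ)}
    (hf : DifferentiableAt ℝ f z.1) (t : Fin N) :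
    pdT (fun z => f z.1) (Sum.inl t) z = pd f t z.1 := by
  have h : HasFDerivAt (fun z : (Fin N → ℝ) × (Fin N → ℝ) => f z.1)
      ((fderiv ℝ f z.1).comp (ContinuousLinearMap.fst ℝ _ _)) z :=
    hf.hasFDerivAt.comp z hasFDerivAt_fst
  simp [pdT, h.fderiv, dir, pd]

lemma pdT_fst_inr {f : (Fin N → ℝ) → ℝ} {z : (Fin N → ℝ) × (Fin N → ℝ)}
    (hf : DifferentiableAt ℝ f z.1) (t : Fin N) :
    pdT (fun z => f z.1) (Sum.inr t) z = 0 := by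
  have h : HasFDerivAt (fun z : (Fin N → ℝ) × (Fin N → ℝ) => f z.1)
      ((fderiv ℝ f z.1).comp (ContinuousLinearMap.fst ℝ _ _)) z :=
    hf.hasFDerivAt.comp z hasFDerivAt_fst
  simp [pdT, h.fderiv, dir]

lemma pdT_snd_apply (r : Fin N) (a : Fin N ⊕ Fin N) (z : (Fin N → ℝ) × (Fin N → ℝ)) :
    pdT (fun z => z.2 r) a z = (dir N a).2 r := by
  have h : (fun z : (Fin N → ℝ) × (Fin N → ℝ) => z.2 r) =
      ⇑((ContinuousLinearMap.proj r (R := ℝ) (φ := fun _ : Fin N => ℝ)).comp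
        (ContinuousLinearMap.snd ℝ _ _)) := rfl
  rw [pdT, h, ContinuousLinearMap.fderiv]
  rfl

/-- Purely algebraic core of the Jacobi identity for a wedge of two commuting
vector fields. -/
lemma wedge_jacobi_alg {ι : Type*} [Fintype ι] (U W : ι → ℝ) (U' W' : ι → ι → ℝ)
    (hcomm : ∀ x, ∑ s, U s * W' x s = ∑ s, W s * U' x s) (a b c : ι) :
    ∑ s, ((U a * W s - U s * W a) *
            (U' b s * W c + U b * W' c s - U' c s * W b - U c * W' b s)
        + (U b * W s - U s * W b) *
            (U' c s * W a + U c * W' a s - U' a s * W c - U a * W' c s)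
        + (U c * W s - U s * W c) *
            (U' a s * W b + U a * W' b s - U' b s * W a - U b * W' a s)) = 0 := by
  have h : ∀ x, ∑ s, (W s * U' x s - U s * W' x s) = 0 := by
    intro x
    rw [Finset.sum_sub_distrib, ← hcomm x, sub_self]
  calc ∑ s, ((U a * W s - U s * W a) *
            (U' b s * W c + U b * W' c s - U' c s * W b - U c * W' b s)
        + (U b * W s - U s * W b) *
            (U' c s * W a + U c * W' a s - U' a s * W c - U a * W' c s)
        + (U c * W s - U s * W c) *
            (U' a s * W b + U a * W' b s - U' b s * W a - U b * W' a s))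
      = ∑ s, ((U a * W c - U c * W a) * (W s * U' b s - U s * W' b s)
          + (U b * W a - U a * W b) * (W s * U' c s - U s * W' c s)
          + (U c * W b - U b * W c) * (W s * U' a s - U s * W' a s)) :=
        Finset.sum_congr rfl fun s _ => by ring
    _ = 0 := by
        rw [Finset.sum_add_distrib, Finset.sum_add_distrib, ← Finset.mul_sum,
          ← Finset.mul_sum, ← Finset.mul_sum, h a, h b, h c]
        ring

end Aux

/-- for any smooth vector field `v` on `ℝ^N`, the bivector field
`v_C ∧ v_V` on `ℝ^N × ℝ^N` is a Poisson tensor. -/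
theorem wedge_liftC_liftV_is_poisson {N : ℕ}
    (v : (Fin N → ℝ) → Fin N → ℝ) (hv : ∀ i, ContDiff ℝ (⊤ : ℕ∞) fun x => v x i) :
    IsPoissonT (wedge (liftC v) (liftV v)) := by
  have hU : ∀ a, ContDiff ℝ (⊤ : ℕ∞) fun z : (Fin N → ℝ) × (Fin N → ℝ) => liftC v z a := by
    rintro (i | i)
    · exact (hv i).comp contDiff_fst
    · show ContDiff ℝ (⊤ : ℕ∞) fun z : (Fin N → ℝ) × (Fin N → ℝ) =>
        ∑ s, pd (fun x => v x i) s z.1 * z.2 s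
      exact ContDiff.sum fun s _ =>
        ((pd_contDiff (hv i) s).comp contDiff_fst).mul (contDiff_snd_apply s)
  have hW : ∀ a, ContDiff ℝ (⊤ : ℕ∞) fun z : (Fin N → ℝ) × (Fin N → ℝ) => liftV v z a := by
    rintro (i | i)
    · exact contDiff_const
    · exact (hv i).comp contDiff_fst
  have hUd : ∀ a z, DifferentiableAt ℝ (fun z => liftC v z a) z := fun a z =>
    ((hU a).differentiable (by simp)) z
  have hWd : ∀ a z, DifferentiableAt ℝ (fun z => liftV v z a) z := fun a z =>
    ((hW a).differentiable (by simp)) z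
  have hvd : ∀ i, Differentiable ℝ fun x => v x i := fun i => (hv i).differentiable (by simp)
  refine ⟨?_, ?_, ?_⟩
  · intro a b
    show ContDiff ℝ (⊤ : ℕ∞) fun z => liftC v z a * liftV v z b - liftC v z b * liftV v z a
    exact ((hU a).mul (hW b)).sub ((hU b).mul (hW a))
  · intro z a b
    show liftC v z b * liftV v z a - liftC v z a * liftV v z b
      = -(liftC v z a * liftV v z b - liftC v z b * liftV v z a)
    ring
  intro z a b c
  have hcomm : ∀ x, ∑ s, liftC v z s * pdT (fun z => liftV v z x) s z
      = ∑ s, liftV v z s * pdT (fun z => liftC v z x) s z := by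
    rintro (i | i)
    · have h0 : ∀ s, pdT (fun z => liftV v z (Sum.inl i)) s z = 0 := by
        intro s
        show pdT (fun _ => (0 : ℝ)) s z = 0
        simp [pdT]
      have h1 : ∀ t, pdT (fun z => liftC v z (Sum.inl i)) (Sum.inr t) z = 0 := fun t =>
        pdT_fst_inr (hvd i z.1) t
      rw [Fintype.sum_sum_type, Fintype.sum_sum_type]
      simp only [h0, h1, mul_zero, zero_mul, Finset.sum_const_zero, add_zero, zero_add]
      simp [liftV]
    · have h2 : ∀ t, pdT (fun z => liftV v z (Sum.inr i)) (Sum.inl t) z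
          = pd (fun x => v x i) t z.1 := fun t => pdT_fst_inl (hvd i z.1) t
      have h3 : ∀ t, pdT (fun z => liftV v z (Sum.inr i)) (Sum.inr t) z = 0 := fun t =>
        pdT_fst_inr (hvd i z.1) t
      have h4 : ∀ t, pdT (fun z => liftC v z (Sum.inr i)) (Sum.inr t) z
          = pd (fun x => v x i) t z.1 := by
        intro t
        have hdiff : ∀ s : Fin N, DifferentiableAt ℝ
            (fun z : (Fin N → ℝ) × (Fin N → ℝ) => pd (fun x => v x i) s z.1 * z.2 s) z :=
          fun s => ((((pd_contDiff (hv i) s).comp contDiff_fst).mul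
            (contDiff_snd_apply s)).differentiable (by simp)) z
        show pdT (fun z => ∑ s, pd (fun x => v x i) s z.1 * z.2 s) (Sum.inr t) z = _
        rw [pdT_sum _ (fun s _ => hdiff s)]
        have hterm : ∀ s : Fin N,
            pdT (fun z => pd (fun x => v x i) s z.1 * z.2 s) (Sum.inr t) z
            = pd (fun x => v x i) s z.1 * Pi.single (M := fun _ : Fin N => ℝ) t 1 s := by
          intro s
          have hA : DifferentiableAt ℝ
              (fun z : (Fin N → ℝ) × (Fin N → ℝ) => pd (fun x => v x i) s z.1) z :=
            (((pd_contDiff (hv i) s).comp contDiff_fst).differentiable (by simp)) z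
          have hB : DifferentiableAt ℝ
              (fun z : (Fin N → ℝ) × (Fin N → ℝ) => z.2 s) z :=
            ((contDiff_snd_apply s).differentiable (by simp)) z
          rw [pdT_mul _ hA hB,
            pdT_fst_inr ((pd_contDiff (hv i) s).differentiable (by simp) z.1),
            pdT_snd_apply]
          simp [dir]
        simp only [hterm]
        simp [Pi.single_apply]
      rw [Fintype.sum_sum_type, Fintype.sum_sum_type]
      simp only [h2, h3, h4]
      simp [liftC, liftV]
  have hder : ∀ (b c s : Fin N ⊕ Fin N),
      pdT (fun z => wedge (liftC v) (liftV v) z b c) s z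
      = (pdT (fun z => liftC v z b) s z * liftV v z c
          + liftC v z b * pdT (fun z => liftV v z c) s z)
        - (pdT (fun z => liftC v z c) s z * liftV v z b
          + liftC v z c * pdT (fun z => liftV v z b) s z) := by
    intro b c s
    show pdT (fun z => liftC v z b * liftV v z c - liftC v z c * liftV v z b) s z = _
    rw [pdT_sub s ((hUd b z).fun_mul (hWd c z)) ((hUd c z).fun_mul (hWd b z)),
      pdT_mul s (hUd b z) (hWd c z), pdT_mul s (hUd c z) (hWd b z)]
  have key := wedge_jacobi_alg (fun s => liftC v z s) (fun s => liftV v z s)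
    (fun x s => pdT (fun z => liftC v z x) s z) (fun x s => pdT (fun z => liftV v z x) s z)
    hcomm a b c
  refine Eq.trans (Finset.sum_congr rfl fun s _ => ?_) key
  rw [hder b c s, hder c a s, hder a b s]
  simp only [wedge, Matrix.of_apply]
  ring
end

section
/- For any C^∞ vector fields v₁, v₂, v₃, v₄ on ℝ^N, the bivector field v₁,V ∧ v₂,V + v₃,V ∧ v₄,V on ℝ^N × ℝ^N (sum of wedges of vertical lifts) is a Poisson tensor. -/
open scoped BigOperators

/-- The entry of the sum of wedges, as a function of the base point only. -/
noncomputable def entAux {N : ℕ} (v₁ v₂ v₃ v₄ : (Fin N → ℝ) → Fin N → ℝ)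
    (b c : Fin N ⊕ Fin N) (x : Fin N → ℝ) : ℝ :=
  (Sum.elim (fun _ => (0:ℝ)) (fun i => v₁ x i) b * Sum.elim (fun _ => (0:ℝ)) (fun i => v₂ x i) c
    - Sum.elim (fun _ => (0:ℝ)) (fun i => v₁ x i) c * Sum.elim (fun _ => (0:ℝ)) (fun i => v₂ x i) b)
  + (Sum.elim (fun _ => (0:ℝ)) (fun i => v₃ x i) b * Sum.elim (fun _ => (0:ℝ)) (fun i => v₄ x i) c
    - Sum.elim (fun _ => (0:ℝ)) (fun i => v₃ x i) c * Sum.elim (fun _ => (0:ℝ)) (fun i => v₄ x i) b)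

lemma entAux_eq {N : ℕ} (v₁ v₂ v₃ v₄ : (Fin N → ℝ) → Fin N → ℝ)
    (b c : Fin N ⊕ Fin N) (z : (Fin N → ℝ) × (Fin N → ℝ)) :
    (wedge (liftV v₁) (liftV v₂) z + wedge (liftV v₃) (liftV v₄) z) b c
      = entAux v₁ v₂ v₃ v₄ b c z.1 := by
  simp [entAux, wedge, liftV, Matrix.add_apply]

lemma elim_contDiff {N : ℕ} {v : (Fin N → ℝ) → Fin N → ℝ}
    (hv : ∀ i, ContDiff ℝ (⊤ : ℕ∞) fun x => v x i) (b : Fin N ⊕ Fin N) :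
    ContDiff ℝ (⊤ : ℕ∞) fun x => Sum.elim (fun _ => (0:ℝ)) (fun i => v x i) b := by
  rcases b with i | i
  · exact contDiff_const
  · exact hv i

lemma entAux_contDiff {N : ℕ} {v₁ v₂ v₃ v₄ : (Fin N → ℝ) → Fin N → ℝ}
    (h₁ : ∀ i, ContDiff ℝ (⊤ : ℕ∞) fun x => v₁ x i) (h₂ : ∀ i, ContDiff ℝ (⊤ : ℕ∞) fun x => v₂ x i)
    (h₃ : ∀ i, ContDiff ℝ (⊤ : ℕ∞) fun x => v₃ x i) (h₄ : ∀ i, ContDiff ℝ (⊤ : ℕ∞) fun x => v₄ x i)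
    (b c : Fin N ⊕ Fin N) : ContDiff ℝ (⊤ : ℕ∞) (entAux v₁ v₂ v₃ v₄ b c) :=
  ((((elim_contDiff h₁ b).mul (elim_contDiff h₂ c)).sub
      ((elim_contDiff h₁ c).mul (elim_contDiff h₂ b))).add
    (((elim_contDiff h₃ b).mul (elim_contDiff h₄ c)).sub
      ((elim_contDiff h₃ c).mul (elim_contDiff h₄ b))))

lemma pdT_of_fst {N : ℕ} (G : (Fin N → ℝ) → ℝ) (hG : Differentiable ℝ G)
    (t : Fin N) (z : (Fin N → ℝ) × (Fin N → ℝ)) :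
    pdT (fun z => G z.1) (Sum.inr t) z = 0 := by
  have h : HasFDerivAt (fun z : (Fin N → ℝ) × (Fin N → ℝ) => G z.1)
      ((fderiv ℝ G z.1).comp (ContinuousLinearMap.fst ℝ _ _)) z :=
    ((hG z.1).hasFDerivAt).comp z hasFDerivAt_fst
  simp [pdT, dir, h.fderiv]

/-- a sum of wedges of vertical lifts is a Poisson tensor. -/
theorem sum_wedge_vertical_is_poisson {N : ℕ}
    (v₁ v₂ v₃ v₄ : (Fin N → ℝ) → Fin N → ℝ)
    (h₁ : ∀ i, ContDiff ℝ (⊤ : ℕ∞) fun x => v₁ x i) (h₂ : ∀ i, ContDiff ℝ (⊤ : ℕ∞) fun x => v₂ x i)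
    (h₃ : ∀ i, ContDiff ℝ (⊤ : ℕ∞) fun x => v₃ x i) (h₄ : ∀ i, ContDiff ℝ (⊤ : ℕ∞) fun x => v₄ x i) :
    IsPoissonT (fun z => wedge (liftV v₁) (liftV v₂) z + wedge (liftV v₃) (liftV v₄) z) := by
  have hc := entAux_contDiff h₁ h₂ h₃ h₄
  refine ⟨fun a b => ?_, fun z a b => ?_, fun z a b c => ?_⟩
  · have e : (fun z => (wedge (liftV v₁) (liftV v₂) z + wedge (liftV v₃) (liftV v₄) z) a b)
        = fun z : (Fin N → ℝ) × (Fin N → ℝ) => entAux v₁ v₂ v₃ v₄ a b z.1 :=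
      funext fun z => entAux_eq v₁ v₂ v₃ v₄ a b z
    rw [e]; exact (hc a b).comp contDiff_fst
  · simp [wedge, Matrix.add_apply]; ring
  · refine Finset.sum_eq_zero fun s _ => ?_
    rcases s with t | t
    · have hz : ∀ (u w : (Fin N → ℝ) → Fin N → ℝ) (a : Fin N ⊕ Fin N),
          wedge (liftV u) (liftV w) z a (Sum.inl t) = 0 := by
        intro u w a; simp [wedge, liftV]
      simp [Matrix.add_apply, hz]
    · have key : ∀ b c : Fin N ⊕ Fin N, pdT (fun z =>
          wedge (liftV v₁) (liftV v₂) z b c + wedge (liftV v₃) (liftV v₄) z b c)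
            (Sum.inr t) z = 0 := by
        intro b c
        have : (fun z => wedge (liftV v₁) (liftV v₂) z b c + wedge (liftV v₃) (liftV v₄) z b c)
            = fun z : (Fin N → ℝ) × (Fin N → ℝ) => entAux v₁ v₂ v₃ v₄ b c z.1 := by
          funext z; exact entAux_eq v₁ v₂ v₃ v₄ b c z
        rw [this]
        exact pdT_of_fst _ ((hc b c).differentiable (by simp)) t z
      simp [key]
end
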